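/- There exist θ₀ ∈ [0, 2π] and a strictly increasing continuously differentiable function ψ : [θ₀ − 2π, θ₀] → ℝ such that ψ(θ₀ − 2π) = 0, ψ(θ₀) = 2nπ, and R(e^{iθ}) = e^{iψ(θ)} for all θ ∈ [θ₀ − 2π, θ₀]. -/

import Mathlib

/-!
Along `w = e^{iθ}`, the logarithmic derivative of a Blaschke factor `(w - z) / (1 - z̄ w)`
with `|z| < 1` is `i` times the Poisson kernel `(1 - |z|²) / |e^{iθ} - z|²`, which is positive
and has integral `2π` over a period. So `R(e^{iθ}) = C e^{iΦ(θ)}` with `|C| = 1`, where `Φ` is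
a strictly increasing `C¹` function with `Φ(θ + 2π) = Φ(θ) + 2nπ` (the factor `z` being the
Blaschke factor with zero `0`). Choosing `θ₀ ∈ [0, 2π]` with `R(e^{iθ₀}) = 1` and shifting `Φ`
by a constant gives `ψ`.
-/

open Complex Real ComplexConjugate

lemma eq_mul_exp_sub_of_hasDerivAt {f g g' : ℝ → ℂ} (hf : ∀ t, HasDerivAt f (g' t * f t) t)
    (hg : ∀ t, HasDerivAt g (g' t) t) (a b : ℝ) : f b = f a * exp (g b - g a) := by
  have hconst : ∀ t, HasDerivAt (fun t ↦ f t * exp (-g t)) 0 t := fun t ↦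
    ((hf t).fun_mul (hg t).fun_neg.cexp).congr_deriv (by ring)
  have h := is_const_of_deriv_eq_zero (fun t ↦ (hconst t).differentiableAt)
    (fun t ↦ (hconst t).deriv) b a
  rw [sub_eq_neg_add, Complex.exp_add, ← mul_assoc, ← h, mul_assoc, ← Complex.exp_add,
    neg_add_cancel, Complex.exp_zero, mul_one]

noncomputable def blaschkeFactor (z w : ℂ) : ℂ := (w - z) / (1 - conj z * w)

lemma blaschkeFactor_zero_left (w : ℂ) : blaschkeFactor 0 w = w := by
  simp [blaschkeFactor]

lemma sub_mul_one_sub_conj_mul {w : ℂ} (hw : ‖w‖ = 1) (z : ℂ) :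
    (w - z) * (1 - conj z * w) = w * (‖w - z‖ ^ 2 : ℝ) := by
  have hww : w * conj w = 1 := by rw [mul_conj', hw]; simp
  push_cast
  rw [← mul_conj', map_sub]
  linear_combination (z - w) * hww

lemma one_sub_conj_mul_ne_zero {z w : ℂ} (hw : ‖w‖ = 1) (hzw : z ≠ w) :
    1 - conj z * w ≠ 0 := by
  intro h
  have := sub_mul_one_sub_conj_mul hw z
  rw [h, mul_zero, eq_comm] at this
  have hw0 : w ≠ 0 := norm_ne_zero_iff.mp (by rw [hw]; exact one_ne_zero)
  simp [hw0, sub_eq_zero, hzw.symm] at this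

lemma norm_blaschkeFactor {z w : ℂ} (hw : ‖w‖ = 1) (hzw : z ≠ w) :
    ‖blaschkeFactor z w‖ = 1 := by
  have h := congrArg norm (sub_mul_one_sub_conj_mul hw z)
  have hne : ‖w - z‖ ≠ 0 := norm_ne_zero_iff.mpr (sub_ne_zero.mpr hzw.symm)
  rw [norm_mul, norm_mul, hw, one_mul, norm_real, Real.norm_of_nonneg (by positivity), sq] at h
  rw [blaschkeFactor, norm_div, mul_left_cancel₀ hne h, div_self hne]

lemma poissonKernel_zero_circleMap (z : ℂ) (t : ℝ) :
    poissonKernel 0 z (circleMap 0 1 t) = (1 - ‖z‖ ^ 2) / ‖exp (t * I) - z‖ ^ 2 := by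
  simp [poissonKernel_def, circleMap_zero, norm_exp_ofReal_mul_I]

lemma exp_mul_I_sub_ne_zero {z : ℂ} (hz : ‖z‖ < 1) (t : ℝ) : exp (t * I) - z ≠ 0 := by
  rw [sub_ne_zero]
  rintro rfl
  simp [norm_exp_ofReal_mul_I] at hz

lemma poissonKernel_zero_circleMap_pos {z : ℂ} (hz : ‖z‖ < 1) (t : ℝ) :
    0 < poissonKernel 0 z (circleMap 0 1 t) := by
  rw [poissonKernel_zero_circleMap]
  have := norm_nonneg z
  have := exp_mul_I_sub_ne_zero hz t
  apply div_pos <;> [nlinarith; positivity]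

lemma continuous_poissonKernel_zero_circleMap {z : ℂ} (hz : ‖z‖ < 1) :
    Continuous fun t ↦ poissonKernel 0 z (circleMap 0 1 t) := by
  simp_rw [poissonKernel_zero_circleMap]
  exact continuous_const.div (by fun_prop)
    fun t ↦ pow_ne_zero _ (norm_ne_zero_iff.mpr (exp_mul_I_sub_ne_zero hz t))

lemma integral_poissonKernel_zero_circleMap {z : ℂ} (hz : ‖z‖ < 1) :
    ∫ t in 0..2 * π, poissonKernel 0 z (circleMap 0 1 t) = 2 * π := by
  have h := (diffContOnCl_const (c := (1 : ℂ))).circleAverage_poissonKernel_smul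
    (mem_ball_zero_iff.mpr hz)
  simp only [Real.circleAverage_def, Pi.smul_apply', real_smul, mul_one] at h
  rw [intervalIntegral.integral_ofReal, ← ofReal_mul, ofReal_eq_one,
    inv_mul_eq_one₀ (by positivity)] at h
  exact h.symm

noncomputable def blaschkeArg (z : ℂ) (θ : ℝ) : ℝ :=
  ∫ t in 0..θ, poissonKernel 0 z (circleMap 0 1 t)

lemma hasDerivAt_blaschkeArg {z : ℂ} (hz : ‖z‖ < 1) (θ : ℝ) :
    HasDerivAt (blaschkeArg z) (poissonKernel 0 z (circleMap 0 1 θ)) θ :=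
  (continuous_poissonKernel_zero_circleMap hz).integral_hasStrictDerivAt 0 θ |>.hasDerivAt

lemma blaschkeArg_zero (z : ℂ) : blaschkeArg z 0 = 0 :=
  intervalIntegral.integral_same

lemma blaschkeArg_add_two_pi {z : ℂ} (hz : ‖z‖ < 1) (θ : ℝ) :
    blaschkeArg z (θ + 2 * π) = blaschkeArg z θ + 2 * π := by
  have hper : Function.Periodic (fun t ↦ poissonKernel 0 z (circleMap 0 1 t)) (2 * π) :=
    fun t ↦ by simp only [periodic_circleMap 0 1 t]
  have h := hper.intervalIntegral_add_eq_add 0 θ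
    fun _ _ ↦ (continuous_poissonKernel_zero_circleMap hz).intervalIntegrable _ _
  rwa [zero_add, integral_poissonKernel_zero_circleMap hz] at h

lemma hasDerivAt_blaschkeFactor_exp_mul_I {z : ℂ} (hz : ‖z‖ < 1) (t : ℝ) :
    HasDerivAt (fun t : ℝ ↦ blaschkeFactor z (exp (t * I)))
      (poissonKernel 0 z (circleMap 0 1 t) * I * blaschkeFactor z (exp (t * I))) t := by
  have hw : ‖exp (t * I)‖ = 1 := norm_exp_ofReal_mul_I t
  have hzw : z ≠ exp (t * I) := fun h ↦ by simp [h, hw] at hz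
  have hexp : HasDerivAt (fun t : ℝ ↦ exp (t * I)) (exp (t * I) * I) t := by
    simpa using ((hasDerivAt_id (t : ℂ)).mul_const I).cexp.comp_ofReal
  have hden := one_sub_conj_mul_ne_zero hw hzw
  have hid := sub_mul_one_sub_conj_mul hw z
  refine ((hexp.sub_const z).div ((hexp.const_mul (conj z)).const_sub 1) hden).congr_deriv ?_
  rw [poissonKernel_zero_circleMap, blaschkeFactor]
  generalize exp (t * I) = w at *
  have hD : ((‖w - z‖ : ℝ) : ℂ) ≠ 0 :=
    ofReal_ne_zero.mpr (norm_ne_zero_iff.mpr (sub_ne_zero.mpr hzw.symm))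
  push_cast at hid ⊢
  rw [← mul_conj' z, mul_comm (conj z) w] at *
  field_simp
  linear_combination -(1 - z * conj z) * hid

lemma blaschkeFactor_exp_mul_I {z : ℂ} (hz : ‖z‖ < 1) (θ : ℝ) :
    blaschkeFactor z (exp (θ * I)) = blaschkeFactor z 1 * exp (blaschkeArg z θ * I) := by
  have hg (t : ℝ) : HasDerivAt (fun t ↦ (blaschkeArg z t : ℂ) * I)
      (poissonKernel 0 z (circleMap 0 1 t) * I) t :=
    (hasDerivAt_blaschkeArg hz t).ofReal_comp.mul_const I
  simpa [blaschkeArg_zero] using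
    eq_mul_exp_sub_of_hasDerivAt (hasDerivAt_blaschkeFactor_exp_mul_I hz) hg 0 θ

lemma contDiff_blaschkeArg {z : ℂ} (hz : ‖z‖ < 1) : ContDiff ℝ 1 (blaschkeArg z) := by
  refine contDiff_one_iff_deriv.mpr ⟨fun θ ↦ (hasDerivAt_blaschkeArg hz θ).differentiableAt, ?_⟩
  rw [funext fun θ ↦ (hasDerivAt_blaschkeArg hz θ).deriv]
  exact continuous_poissonKernel_zero_circleMap hz

section Finset

variable {ι : Type*} {s : Finset ι} {z : ι → ℂ}

lemma prod_blaschkeFactor_exp_mul_I (hz : ∀ i ∈ s, ‖z i‖ < 1) (θ : ℝ) :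
    ∏ i ∈ s, blaschkeFactor (z i) (exp (θ * I))
      = (∏ i ∈ s, blaschkeFactor (z i) 1) * exp ((∑ i ∈ s, blaschkeArg (z i) θ : ℝ) * I) := by
  rw [Finset.prod_congr rfl fun i hi ↦ blaschkeFactor_exp_mul_I (hz i hi) θ,
    Finset.prod_mul_distrib, ofReal_sum, Finset.sum_mul, Complex.exp_sum]

lemma norm_prod_blaschkeFactor_one (hz : ∀ i ∈ s, ‖z i‖ < 1) :
    ‖∏ i ∈ s, blaschkeFactor (z i) 1‖ = 1 := by
  rw [norm_prod]
  refine Finset.prod_eq_one fun i hi ↦ norm_blaschkeFactor norm_one ?_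
  rintro h
  simpa [h] using hz i hi

lemma strictMono_sum_blaschkeArg (hs : s.Nonempty) (hz : ∀ i ∈ s, ‖z i‖ < 1) :
    StrictMono fun θ ↦ ∑ i ∈ s, blaschkeArg (z i) θ := by
  refine strictMono_of_deriv_pos fun θ ↦ ?_
  rw [(HasDerivAt.fun_sum fun i hi ↦ hasDerivAt_blaschkeArg (hz i hi) θ).deriv]
  exact Finset.sum_pos (fun i hi ↦ poissonKernel_zero_circleMap_pos (hz i hi) θ) hs

lemma sum_blaschkeArg_add_two_pi (hz : ∀ i ∈ s, ‖z i‖ < 1) (θ : ℝ) :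
    ∑ i ∈ s, blaschkeArg (z i) (θ + 2 * π) = ∑ i ∈ s, blaschkeArg (z i) θ + 2 * s.card * π := by
  rw [Finset.sum_congr rfl fun i hi ↦ blaschkeArg_add_two_pi (hz i hi) θ, Finset.sum_add_distrib,
    Finset.sum_const, nsmul_eq_mul]
  ring

end Finset

lemma exists_mem_Icc_exp_mul_I_eq {Φ : ℝ → ℝ} (hΦ : Continuous Φ) (h : Φ 0 + 2 * π ≤ Φ (2 * π))
    {u : ℂ} (hu : ‖u‖ = 1) : ∃ θ ∈ Set.Icc 0 (2 * π), exp (Φ θ * I) = u := by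
  set x := toIocMod two_pi_pos (Φ 0) (arg u)
  have hx : x ∈ Set.Icc (Φ 0) (Φ (2 * π)) := by
    have := toIocMod_mem_Ioc two_pi_pos (Φ 0) (arg u)
    exact ⟨this.1.le, this.2.trans h⟩
  obtain ⟨θ, hθ, hθx⟩ := intermediate_value_Icc two_pi_pos.le hΦ.continuousOn hx
  refine ⟨θ, hθ, ?_⟩
  rw [hθx, ← norm_mul_exp_arg_mul_I u, hu, ofReal_one, one_mul, exp_eq_exp_iff_exists_int]
  refine ⟨-toIocDiv two_pi_pos (Φ 0) (arg u), ?_⟩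
  have hx' : x = arg u + _ := sub_eq_iff_eq_add'.mp (toIocMod_sub_self_eq_mul two_pi_pos (Φ 0) _)
  rw [hx']
  push_cast
  ring

theorem exists_circle_lift_mul_prod_blaschkeFactor {ι : Type*} {s : Finset ι} {z : ι → ℂ}
    (hs : s.Nonempty) (hz : ∀ i ∈ s, ‖z i‖ < 1) {lam : ℂ} (hlam : ‖lam‖ = 1) :
    ∃ θ₀ ∈ Set.Icc 0 (2 * π), ∃ ψ : ℝ → ℝ, StrictMono ψ ∧ ContDiff ℝ 1 ψ ∧
      ψ (θ₀ - 2 * π) = 0 ∧ ψ θ₀ = 2 * s.card * π ∧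
      ∀ θ : ℝ, lam * ∏ i ∈ s, blaschkeFactor (z i) (exp (θ * I)) = exp (ψ θ * I) := by
  set Φ := fun θ ↦ ∑ i ∈ s, blaschkeArg (z i) θ
  set C := lam * ∏ i ∈ s, blaschkeFactor (z i) 1
  have hΦ : ContDiff ℝ 1 Φ := ContDiff.sum fun i hi ↦ contDiff_blaschkeArg (hz i hi)
  have hper (θ : ℝ) : Φ (θ + 2 * π) = Φ θ + 2 * s.card * π := sum_blaschkeArg_add_two_pi hz θ
  have hwind : Φ 0 + 2 * π ≤ Φ (2 * π) := by
    have : (1 : ℝ) ≤ s.card := by exact_mod_cast hs.card_pos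
    rw [← zero_add (2 * π), hper]
    nlinarith [pi_pos]
  have hC : ‖C⁻¹‖ = 1 := by
    rw [norm_inv, norm_mul, hlam, norm_prod_blaschkeFactor_one hz, one_mul, inv_one]
  obtain ⟨θ₀, hθ₀, hΦθ₀⟩ := exists_mem_Icc_exp_mul_I_eq hΦ.continuous hwind hC
  refine ⟨θ₀, hθ₀, fun θ ↦ Φ θ + (2 * s.card * π - Φ θ₀),
    (strictMono_sum_blaschkeArg hs hz).add_const _, hΦ.add contDiff_const, ?_, by ring,
    fun θ ↦ ?_⟩
  · have := hper (θ₀ - 2 * π)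
    rw [sub_add_cancel] at this
    dsimp only
    linarith
  · rw [prod_blaschkeFactor_exp_mul_I hz, ← mul_assoc]
    push_cast
    have hturns : exp (2 * s.card * π * I) = 1 := by
      rw [← exp_nat_mul_two_pi_mul_I s.card]
      ring_nf
    rw [add_mul, sub_mul, Complex.exp_add, Complex.exp_sub, hΦθ₀, hturns, one_div, inv_inv,
      mul_comm]
    simp only [Φ, C, ofReal_sum]

/-- There exist `θ₀ ∈ [0, 2π]` and a strictly increasing continuously
differentiable function `ψ : [θ₀ − 2π, θ₀] → ℝ` such that `ψ(θ₀ − 2π) = 0`,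
`ψ(θ₀) = 2nπ`, and `R(e^{iθ}) = e^{iψ(θ)}` for all `θ ∈ [θ₀ − 2π, θ₀]`. -/
theorem blaschke_circle_lift
    (n : ℕ) (hn : 2 ≤ n) (zs : ℕ → ℂ)
    (hzs : ∀ k ∈ Finset.Ico 1 n, ‖zs k‖ < 1)
    (lam : ℂ) (hlam : ‖lam‖ = 1) (R : ℂ → ℂ)
    (hR : ∀ z : ℂ, R z = lam * z * ∏ k ∈ Finset.Ico 1 n,
      (z - zs k) / (1 - (starRingEnd ℂ) (zs k) * z)) :
    ∃ θ₀ ∈ Set.Icc (0 : ℝ) (2 * Real.pi), ∃ ψ : ℝ → ℝ,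
      StrictMonoOn ψ (Set.Icc (θ₀ - 2 * Real.pi) θ₀)
      ∧ ContDiffOn ℝ 1 ψ (Set.Icc (θ₀ - 2 * Real.pi) θ₀)
      ∧ ψ (θ₀ - 2 * Real.pi) = 0
      ∧ ψ θ₀ = 2 * n * Real.pi
      ∧ ∀ θ ∈ Set.Icc (θ₀ - 2 * Real.pi) θ₀,
          R (Complex.exp (θ * Complex.I)) = Complex.exp (ψ θ * Complex.I) := by
  set ζ : ℕ → ℂ := fun k ↦ if k = 0 then 0 else zs k
  have hRζ (w : ℂ) : R w = lam * ∏ k ∈ Finset.range n, blaschkeFactor (ζ k) w := by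
    rw [hR, Finset.prod_range_eq_mul_Ico _ (by omega), ← mul_assoc]
    simp only [ζ, if_pos, blaschkeFactor_zero_left]
    congr 1
    refine Finset.prod_congr rfl fun k hk ↦ ?_
    rw [if_neg (Nat.one_le_iff_ne_zero.mp (Finset.mem_Ico.mp hk).1), blaschkeFactor]
  have hζ : ∀ k ∈ Finset.range n, ‖ζ k‖ < 1 := by
    intro k hk
    simp only [ζ]
    split_ifs with hk0
    · simp
    · exact hzs k (by simp only [Finset.mem_range, Finset.mem_Ico] at hk ⊢; omega)
  obtain ⟨θ₀, hθ₀, ψ, hmono, hC1, hψ₀, hψ₁, hlift⟩ :=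
    exists_circle_lift_mul_prod_blaschkeFactor (Finset.nonempty_range_iff.mpr (by omega)) hζ hlam
  refine ⟨θ₀, hθ₀, ψ, hmono.strictMonoOn _, hC1.contDiffOn, hψ₀, by simpa using hψ₁,
    fun θ _ ↦ by rw [hRζ, hlift]⟩
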